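/- Let m and e be integers with e ≥ 0. Then Σ_{n=0}^{∞} (u^{e+2})^n / (q;q)_n · I_Δ(m-n, e) converges absolutely and equals u^{-m·e} · (q^{1-m};q)_∞ / (q;q)_∞, where (q^{1-m};q)_∞ = ∏_{i=0}^{∞}(1 - q^{1-m+i}). In particular the sum vanishes when m > 0. -/

import Mathlib

open scoped BigOperators

/-- Finite q-Pochhammer symbol `(a;q)_n = ∏_{i=0}^{n-1} (1 - a q^i)`. -/
noncomputable def qPoch (a q : ℂ) (n : ℕ) : ℂ :=
  ∏ i ∈ Finset.range n, (1 - a * q ^ i)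

/-- Infinite q-Pochhammer symbol `(a;q)_∞ = ∏_{i=0}^{∞} (1 - a q^i)`. -/
noncomputable def qPochInf (a q : ℂ) : ℂ :=
  ∏' i : ℕ, (1 - a * q ^ i)

/-- The `n`-th term of the series defining the tetrahedral index `I_Δ(m,e)`,
with `q = u^2` and vanishing below `e₊ = max(-e,0)`. -/
noncomputable def tetTerm (u : ℂ) (m e : ℤ) (n : ℕ) : ℂ :=
  if (-e).toNat ≤ n then
    (-1 : ℂ) ^ n * u ^ ((n : ℤ) * ((n : ℤ) + 1) - (2 * (n : ℤ) + e) * m) /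
      (qPoch (u ^ 2) (u ^ 2) n * qPoch (u ^ 2) (u ^ 2) ((n : ℤ) + e).toNat)
  else 0

/-- The tetrahedral index `I_Δ(m,e) = Σ_{n=e₊}^∞ (-1)^n u^{n(n+1)-(2n+e)m}/((q;q)_n (q;q)_{n+e})`. -/
noncomputable def tetIndex (u : ℂ) (m e : ℤ) : ℂ := ∑' n : ℕ, tetTerm u m e n

/-!
Substituting the series for `I_Δ(m - n, e)` turns the sum into a double series whose `(n, k)`
term is the `k`-th term of `I_Δ(m, e)` times `(q^(k+e+1))ⁿ/(q;q)ₙ`; it converges absolutely thanks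
to the Gaussian factor `u^(k²)`. Summing first over `n` with Euler's identity
`Σ zⁿ/(q;q)ₙ = 1/(z;q)_∞` gives `(q;q)_{k+e}/(q;q)_∞`, which cancels the second Pochhammer symbol
of `I_Δ`; the remaining sum over `k` is, up to the factor `u^(-me)`, Euler's other identity
`Σ (-1)ᵏ q^(k choose 2) zᵏ/(q;q)ₖ = (z;q)_∞` at `z = q^(1-m)`. Both identities come from the
functional equations of the two series under `z ↦ qz`, iterated `n` times, letting `qⁿz → 0`.
For `m > 0` the factor `1 - q^(1-m) q^(m-1)` of `(q^(1-m);q)_∞` vanishes.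
-/

open Filter Topology

@[simp]
lemma qPoch_zero (a q : ℂ) : qPoch a q 0 = 1 := Finset.prod_range_zero _

lemma qPoch_succ (a q : ℂ) (n : ℕ) : qPoch a q (n + 1) = qPoch a q n * (1 - a * q ^ n) :=
  Finset.prod_range_succ _ n

section QPochhammer

variable {q : ℂ}

lemma summable_norm_mul_pow (hq : ‖q‖ < 1) (a : ℂ) : Summable fun i : ℕ => ‖a * q ^ i‖ := by
  simpa only [norm_mul, norm_pow] using
    (summable_geometric_of_lt_one (norm_nonneg q) hq).mul_left ‖a‖

lemma multipliable_one_sub_mul_pow (hq : ‖q‖ < 1) (a : ℂ) :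
    Multipliable fun i : ℕ => 1 - a * q ^ i := by
  simpa only [sub_eq_add_neg] using
    multipliable_one_add_of_summable (f := fun i => -(a * q ^ i))
      (by simpa only [norm_neg] using summable_norm_mul_pow hq a)

lemma tendsto_qPoch (hq : ‖q‖ < 1) (a : ℂ) :
    Tendsto (qPoch a q) atTop (𝓝 (qPochInf a q)) :=
  (multipliable_one_sub_mul_pow hq a).hasProd.tendsto_prod_nat

lemma qPochInf_ne_zero (hq : ‖q‖ < 1) {a : ℂ} (ha : ∀ i, 1 - a * q ^ i ≠ 0) :
    qPochInf a q ≠ 0 := by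
  simpa only [qPochInf, sub_eq_add_neg] using
    tprod_one_add_ne_zero_of_summable (f := fun i => -(a * q ^ i))
      (by simpa only [← sub_eq_add_neg] using ha)
      (by simpa only [norm_neg] using summable_norm_mul_pow hq a)

lemma qPoch_mul_qPochInf (hq : ‖q‖ < 1) (a : ℂ) (k : ℕ) :
    qPoch a q k * qPochInf (a * q ^ k) q = qPochInf a q := by
  have h : Multipliable fun i => 1 - a * q ^ (i + k) :=
    (multipliable_one_sub_mul_pow hq (a * q ^ k)).congr fun i => by rw [pow_add]; ring
  calc qPoch a q k * qPochInf (a * q ^ k) q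
      = (∏ i ∈ Finset.range k, (1 - a * q ^ i)) * ∏' i, (1 - a * q ^ (i + k)) := by
        rw [qPoch, qPochInf]
        exact congrArg _ (tprod_congr fun i => by rw [pow_add]; ring)
    _ = qPochInf a q := h.prod_mul_tprod_nat_mul' (f := fun i => 1 - a * q ^ i)

lemma one_sub_mul_pow_ne_zero {a : ℂ} (ha : ‖a‖ < 1) (hq : ‖q‖ ≤ 1) (i : ℕ) :
    1 - a * q ^ i ≠ 0 := by
  refine sub_ne_zero.2 fun h => ?_
  have : ‖a * q ^ i‖ < 1 := by
    rw [norm_mul, norm_pow]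
    exact mul_lt_one_of_nonneg_of_lt_one_left (norm_nonneg a) ha
      (pow_le_one₀ (norm_nonneg q) hq)
  simp [← h] at this

lemma qPoch_ne_zero {a : ℂ} (ha : ‖a‖ < 1) (hq : ‖q‖ ≤ 1) (n : ℕ) : qPoch a q n ≠ 0 :=
  Finset.prod_ne_zero_iff.2 fun i _ => one_sub_mul_pow_ne_zero ha hq i

lemma qPochInf_self_ne_zero (hq : ‖q‖ < 1) : qPochInf q q ≠ 0 :=
  qPochInf_ne_zero hq (one_sub_mul_pow_ne_zero hq hq.le)

lemma exists_norm_inv_qPoch_le (hq : ‖q‖ < 1) : ∃ B, ∀ n, ‖(qPoch q q n)⁻¹‖ ≤ B := by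
  have h := (tendsto_qPoch hq q).inv₀ (qPochInf_self_ne_zero hq)
  obtain ⟨B, hB⟩ := isBounded_iff_forall_norm_le.1 (Metric.isBounded_range_of_tendsto _ h)
  exact ⟨B, fun n => hB _ ⟨n, rfl⟩⟩

lemma qPochInf_zpow_one_sub_eq_zero (hq : q ≠ 0) {m : ℤ} (hm : 0 < m) :
    qPochInf (q ^ (1 - m)) q = 0 := by
  refine tprod_of_exists_eq_zero ⟨(m - 1).toNat, ?_⟩
  rw [← zpow_natCast, Int.toNat_of_nonneg (by omega), ← zpow_add₀ hq]
  simp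

end QPochhammer

section PowerSeries

variable {a : ℕ → ℂ}

lemma summable_mul_pow_of_norm_le {R : ℝ} (h : Summable fun k => ‖a k‖ * R ^ k) {z : ℂ}
    (hz : ‖z‖ ≤ R) : Summable fun k => a k * z ^ k :=
  Summable.of_norm_bounded h fun k => by
    rw [norm_mul, norm_pow]
    gcongr

lemma tendsto_tsum_mul_pow {R : ℝ} (hR : 0 < R) (h : Summable fun k => ‖a k‖ * R ^ k)
    {w : ℕ → ℂ} (hw : Tendsto w atTop (𝓝 0)) :
    Tendsto (fun n => ∑' k, a k * w n ^ k) atTop (𝓝 (a 0)) := by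
  have hcont : ContinuousOn (fun z => ∑' k, a k * z ^ k) (Metric.closedBall 0 R) :=
    continuousOn_tsum (fun k => (continuous_const.mul (continuous_pow k)).continuousOn) h
      fun k z hz => by
        rw [norm_mul, norm_pow]
        gcongr
        simpa using hz
  have h0 : ∑' k, a k * (0 : ℂ) ^ k = a 0 := by
    rw [tsum_eq_single 0 fun k hk => by simp [hk]]
    simp
  simpa only [h0, Function.comp_def] using
    (hcont.continuousAt (Metric.closedBall_mem_nhds 0 hR)).tendsto.comp hw

lemma tsum_mul_pow_sub_tsum_mul_pow {z q : ℂ} (h₁ : Summable fun k => a k * z ^ k)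
    (h₂ : Summable fun k => a k * (q * z) ^ k) :
    ∑' k, a k * z ^ k - ∑' k, a k * (q * z) ^ k
      = ∑' k, a (k + 1) * (1 - q ^ (k + 1)) * z ^ (k + 1) := by
  rw [← h₁.tsum_sub h₂, (h₁.sub h₂).tsum_eq_zero_add]
  simp only [pow_zero, mul_one, sub_self, zero_add]
  exact tsum_congr fun k => by ring

end PowerSeries

section Euler

variable {q : ℂ}

lemma norm_pow_mul_le (hq : ‖q‖ ≤ 1) (n : ℕ) (z : ℂ) : ‖q ^ n * z‖ ≤ ‖z‖ := by
  rw [norm_mul, norm_pow]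
  exact mul_le_of_le_one_left (norm_nonneg z) (pow_le_one₀ (norm_nonneg q) hq)

lemma tendsto_pow_mul_nhds_zero (hq : ‖q‖ < 1) (z : ℂ) :
    Tendsto (fun n : ℕ => q ^ n * z) atTop (𝓝 0) := by
  simpa using (tendsto_pow_atTop_nhds_zero_of_norm_lt_one hq).mul_const z

lemma summable_norm_inv_qPoch_mul_pow (hq : ‖q‖ < 1) {R : ℝ} (hR0 : 0 ≤ R) (hR : R < 1) :
    Summable fun k => ‖(qPoch q q k)⁻¹‖ * R ^ k := by
  obtain ⟨B, hB⟩ := exists_norm_inv_qPoch_le hq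
  exact Summable.of_nonneg_of_le (fun k => by positivity)
    (fun k => mul_le_mul_of_nonneg_right (hB k) (by positivity))
    ((summable_geometric_of_lt_one hR0 hR).mul_left B)

lemma summable_norm_mul_inv_qPoch_mul_pow (hq : ‖q‖ < 1) {c w : ℕ → ℂ}
    (hc : Summable fun k => ‖c k‖) {r : ℝ} (hr : r < 1) (hw : ∀ k, ‖w k‖ ≤ r) :
    Summable fun p : ℕ × ℕ => ‖c p.2 * ((qPoch q q p.1)⁻¹ * w p.2 ^ p.1)‖ := by
  have hr0 : 0 ≤ r := (norm_nonneg _).trans (hw 0)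
  refine Summable.of_nonneg_of_le (fun p => norm_nonneg _) (fun p => ?_)
    ((summable_norm_inv_qPoch_mul_pow hq hr0 hr).mul_of_nonneg hc
      (fun n => by positivity) (fun k => norm_nonneg _))
  rw [norm_mul, norm_mul, norm_pow, mul_comm]
  gcongr
  exact hw _

lemma tsum_inv_qPoch_mul_pow_mul (hq : ‖q‖ < 1) {z : ℂ} (hz : ‖z‖ < 1) :
    ∑' k, (qPoch q q k)⁻¹ * (q * z) ^ k = (1 - z) * ∑' k, (qPoch q q k)⁻¹ * z ^ k := by
  have hs : ∀ {w : ℂ}, ‖w‖ < 1 → Summable fun k => (qPoch q q k)⁻¹ * w ^ k := fun hw =>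
    summable_mul_pow_of_norm_le (summable_norm_inv_qPoch_mul_pow hq (norm_nonneg _) hw) le_rfl
  have h := tsum_mul_pow_sub_tsum_mul_pow (hs hz)
    (hs (lt_of_le_of_lt (by simpa using norm_pow_mul_le hq.le 1 z) hz))
  have hterm : ∀ k, (qPoch q q (k + 1))⁻¹ * (1 - q ^ (k + 1)) * z ^ (k + 1)
      = z * ((qPoch q q k)⁻¹ * z ^ k) := fun k => by
    have := one_sub_mul_pow_ne_zero hq hq.le k
    rw [qPoch_succ, ← pow_succ']
    rw [← pow_succ'] at this
    field_simp
    ring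
  rw [tsum_congr hterm, tsum_mul_left] at h
  linear_combination -h

lemma tsum_inv_qPoch_mul_pow_mul_qPochInf (hq : ‖q‖ < 1) {z : ℂ} (hz : ‖z‖ < 1) :
    (∑' k, (qPoch q q k)⁻¹ * z ^ k) * qPochInf z q = 1 := by
  set G : ℂ → ℂ := fun w => ∑' k, (qPoch q q k)⁻¹ * w ^ k
  have hiter : ∀ n, G (q ^ n * z) = qPoch z q n * G z := by
    intro n
    induction n with
    | zero => simp
    | succ n ih =>
      have hw := lt_of_le_of_lt (norm_pow_mul_le hq.le n z) hz
      simp only [G] at ih ⊢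
      rw [pow_succ', mul_assoc, tsum_inv_qPoch_mul_pow_mul hq hw, ih, qPoch_succ]
      ring
  have h1 : Tendsto (fun n => G (q ^ n * z)) atTop (𝓝 1) := by
    simpa using tendsto_tsum_mul_pow (by norm_num : (0 : ℝ) < 1 / 2)
      (summable_norm_inv_qPoch_mul_pow hq (by norm_num) (by norm_num))
      (tendsto_pow_mul_nhds_zero hq z)
  rw [funext hiter] at h1
  rw [mul_comm]
  exact tendsto_nhds_unique ((tendsto_qPoch hq z).mul_const (G z)) h1

lemma tsum_inv_qPoch_mul_pow_pow_succ (hq : ‖q‖ < 1) (j : ℕ) :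
    ∑' n, (qPoch q q n)⁻¹ * (q ^ (j + 1)) ^ n = qPoch q q j / qPochInf q q := by
  have hB := tsum_inv_qPoch_mul_pow_mul_qPochInf hq (z := q ^ (j + 1))
    (lt_of_le_of_lt (by simpa [pow_succ] using norm_pow_mul_le hq.le j q) hq)
  have hsplit := qPoch_mul_qPochInf hq q j
  rw [← pow_succ'] at hsplit
  have hne : qPochInf (q ^ (j + 1)) q ≠ 0 := right_ne_zero_of_mul_eq_one hB
  rw [← hsplit, eq_div_iff (mul_ne_zero (qPoch_ne_zero hq hq.le j) hne)]
  linear_combination qPoch q q j * hB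

end Euler

lemma choose_two_succ (k : ℕ) : (k + 1).choose 2 = k.choose 2 + k := by
  rw [Nat.choose_succ_succ, Nat.choose_one_right, add_comm]

lemma two_mul_choose_two (k : ℕ) : 2 * (k.choose 2 : ℤ) = k * (k - 1) := by
  induction k with
  | zero => simp
  | succ k ih =>
    rw [choose_two_succ]
    push_cast
    linear_combination ih

/-- The coefficients of Euler's expansion `(z;q)_∞ = Σ (-1)ᵏ q^(k choose 2) zᵏ/(q;q)ₖ`. -/
noncomputable def eulerCoeff (q : ℂ) (k : ℕ) : ℂ := (-1) ^ k * q ^ k.choose 2 / qPoch q q k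

section EulerCoeff

variable {q : ℂ}

lemma summable_pow_choose_two_mul_pow {x : ℝ} (hx0 : 0 ≤ x) (hx1 : x < 1) {r : ℝ}
    (hr : 0 ≤ r) : Summable fun k => x ^ k.choose 2 * r ^ k := by
  refine summable_of_ratio_norm_eventually_le (r := 1 / 2) (by norm_num) ?_
  have hlim : Tendsto (fun k : ℕ => x ^ k * r) atTop (𝓝 0) := by
    simpa using (tendsto_pow_atTop_nhds_zero_of_lt_one hx0 hx1).mul_const r
  filter_upwards [hlim.eventually_le_const (by norm_num : (0 : ℝ) < 1 / 2)] with k hk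
  rw [Real.norm_of_nonneg (by positivity), Real.norm_of_nonneg (by positivity),
    choose_two_succ, pow_add, pow_succ]
  calc x ^ k.choose 2 * x ^ k * (r ^ k * r) = (x ^ k * r) * (x ^ k.choose 2 * r ^ k) := by ring
    _ ≤ 1 / 2 * (x ^ k.choose 2 * r ^ k) := by gcongr

lemma summable_norm_eulerCoeff_mul_pow (hq : ‖q‖ < 1) {R : ℝ} (hR : 0 ≤ R) :
    Summable fun k => ‖eulerCoeff q k‖ * R ^ k := by
  obtain ⟨B, hB⟩ := exists_norm_inv_qPoch_le hq
  refine Summable.of_nonneg_of_le (fun k => by positivity) (fun k => ?_)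
    ((summable_pow_choose_two_mul_pow (norm_nonneg q) hq hR).mul_left B)
  rw [eulerCoeff, div_eq_mul_inv, norm_mul, norm_mul, norm_pow, norm_neg, norm_one, one_pow,
    one_mul, norm_pow]
  calc ‖q‖ ^ k.choose 2 * ‖(qPoch q q k)⁻¹‖ * R ^ k
      ≤ ‖q‖ ^ k.choose 2 * B * R ^ k := by gcongr; exact hB k
    _ = B * (‖q‖ ^ k.choose 2 * R ^ k) := by ring

lemma eulerCoeff_succ_mul (hq : ‖q‖ < 1) (k : ℕ) :
    eulerCoeff q (k + 1) * (1 - q ^ (k + 1)) = -(q ^ k * eulerCoeff q k) := by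
  have h := one_sub_mul_pow_ne_zero hq hq.le k
  rw [← pow_succ'] at h
  rw [eulerCoeff, eulerCoeff, qPoch_succ, ← pow_succ', choose_two_succ]
  field_simp
  ring

lemma tsum_eulerCoeff_mul_pow_eq (hq : ‖q‖ < 1) (z : ℂ) :
    ∑' k, eulerCoeff q k * z ^ k = (1 - z) * ∑' k, eulerCoeff q k * (q * z) ^ k := by
  have hs : ∀ w : ℂ, Summable fun k => eulerCoeff q k * w ^ k := fun w =>
    summable_mul_pow_of_norm_le (summable_norm_eulerCoeff_mul_pow hq (norm_nonneg w)) le_rfl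
  have h := tsum_mul_pow_sub_tsum_mul_pow (hs z) (hs (q * z))
  have hterm : ∀ k, eulerCoeff q (k + 1) * (1 - q ^ (k + 1)) * z ^ (k + 1)
      = -z * (eulerCoeff q k * (q * z) ^ k) := fun k => by
    rw [eulerCoeff_succ_mul hq]
    ring
  rw [tsum_congr hterm, tsum_mul_left] at h
  linear_combination h

theorem tsum_eulerCoeff_mul_pow (hq : ‖q‖ < 1) (z : ℂ) :
    ∑' k, eulerCoeff q k * z ^ k = qPochInf z q := by
  set F : ℂ → ℂ := fun w => ∑' k, eulerCoeff q k * w ^ k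
  have hiter : ∀ n, F z = qPoch z q n * F (q ^ n * z) := by
    intro n
    induction n with
    | zero => simp
    | succ n ih =>
      simp only [F] at ih ⊢
      rw [ih, tsum_eulerCoeff_mul_pow_eq hq, qPoch_succ, pow_succ', mul_assoc q]
      ring
  have h1 : Tendsto (fun n => F (q ^ n * z)) atTop (𝓝 (eulerCoeff q 0)) :=
    tendsto_tsum_mul_pow one_pos (summable_norm_eulerCoeff_mul_pow hq zero_le_one)
      (tendsto_pow_mul_nhds_zero hq z)
  have h2 := (tendsto_qPoch hq z).mul h1
  rw [show eulerCoeff q 0 = 1 by simp [eulerCoeff], mul_one, ← funext hiter] at h2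
  exact tendsto_nhds_unique tendsto_const_nhds h2

end EulerCoeff

section TetrahedralIndex

variable {u : ℂ}

lemma norm_sq_lt_one (hu1 : ‖u‖ < 1) : ‖u ^ 2‖ < 1 := by
  rw [norm_pow]
  exact pow_lt_one₀ (norm_nonneg u) hu1 two_ne_zero

lemma tetTerm_natCast (u : ℂ) (m : ℤ) (E k : ℕ) :
    tetTerm u m E k = (-1) ^ k * u ^ ((k : ℤ) * (k + 1) - (2 * k + E) * m) /
      (qPoch (u ^ 2) (u ^ 2) k * qPoch (u ^ 2) (u ^ 2) (k + E)) := by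
  rw [tetTerm, if_pos (by omega), (by omega : ((k : ℤ) + E).toNat = k + E)]

lemma tetTerm_sub_natCast (hu : u ≠ 0) (m e : ℤ) (n k : ℕ) :
    tetTerm u (m - n) e k = u ^ ((2 * k + e) * n) * tetTerm u m e k := by
  unfold tetTerm
  split_ifs
  · rw [mul_div_assoc', mul_left_comm, ← zpow_add₀ hu]
    ring_nf
  · rw [mul_zero]

lemma zpow_two_mul_natCast (u : ℂ) (a : ℤ) (k : ℕ) : u ^ (2 * a * k) = ((u ^ 2) ^ a) ^ k := by
  rw [zpow_mul, zpow_natCast, zpow_mul, zpow_ofNat]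

lemma tetTerm_eq_eulerCoeff (hu : u ≠ 0) (m : ℤ) (E k : ℕ) :
    tetTerm u m E k = u ^ (-(m * E)) * (eulerCoeff (u ^ 2) k * ((u ^ 2) ^ (1 - m)) ^ k) /
      qPoch (u ^ 2) (u ^ 2) (k + E) := by
  have hchoose : ((u ^ 2) ^ k.choose 2 : ℂ) = u ^ ((k : ℤ) * (k - 1)) := by
    rw [← pow_mul, ← zpow_natCast, ← two_mul_choose_two]
    push_cast
    rfl
  have hexp : u ^ ((k : ℤ) * (k + 1) - (2 * k + E) * m)
      = u ^ (-(m * E)) * u ^ ((k : ℤ) * (k - 1)) * u ^ (2 * (1 - m) * k) := by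
    rw [← zpow_add₀ hu, ← zpow_add₀ hu]
    ring_nf
  rw [tetTerm_natCast, eulerCoeff, hchoose, ← zpow_two_mul_natCast, hexp]
  ring

lemma summable_norm_tetTerm (hu : u ≠ 0) (hu1 : ‖u‖ < 1) (m : ℤ) (E : ℕ) :
    Summable fun k => ‖tetTerm u m E k‖ := by
  have hq := norm_sq_lt_one hu1
  obtain ⟨B, hB⟩ := exists_norm_inv_qPoch_le hq
  refine Summable.of_nonneg_of_le (fun k => norm_nonneg _) (fun k => ?_)
    ((summable_norm_eulerCoeff_mul_pow hq (norm_nonneg ((u ^ 2) ^ (1 - m)))).mul_left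
      (‖u ^ (-(m * E))‖ * B))
  rw [tetTerm_eq_eulerCoeff hu, div_eq_mul_inv, norm_mul, norm_mul, norm_mul, norm_pow]
  calc ‖u ^ (-(m * E))‖ * (‖eulerCoeff (u ^ 2) k‖ * ‖(u ^ 2) ^ (1 - m)‖ ^ k)
        * ‖(qPoch (u ^ 2) (u ^ 2) (k + E))⁻¹‖
      ≤ ‖u ^ (-(m * E))‖ * (‖eulerCoeff (u ^ 2) k‖ * ‖(u ^ 2) ^ (1 - m)‖ ^ k) * B := by
        gcongr
        exact hB _
    _ = _ := by ring

lemma pow_div_qPoch_mul_tetTerm_sub (hu : u ≠ 0) (m : ℤ) (E n k : ℕ) :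
    (u ^ ((E : ℤ) + 2)) ^ n / qPoch (u ^ 2) (u ^ 2) n * tetTerm u (m - n) E k
      = tetTerm u m E k * ((qPoch (u ^ 2) (u ^ 2) n)⁻¹ * ((u ^ 2) ^ (k + E + 1)) ^ n) := by
  have hpow : (u ^ ((E : ℤ) + 2)) ^ n * u ^ ((2 * (k : ℤ) + E) * n)
      = ((u ^ 2) ^ (k + E + 1)) ^ n := by
    rw [← zpow_natCast (u ^ 2), ← zpow_two_mul_natCast, ← zpow_natCast, ← zpow_mul,
      ← zpow_add₀ hu]
    push_cast
    ring_nf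
  rw [tetTerm_sub_natCast hu, ← hpow]
  ring

lemma tsum_tetTerm_mul_inv_qPoch_mul_pow (hu : u ≠ 0) (hu1 : ‖u‖ < 1) (m : ℤ) (E k : ℕ) :
    ∑' n, tetTerm u m E k * ((qPoch (u ^ 2) (u ^ 2) n)⁻¹ * ((u ^ 2) ^ (k + E + 1)) ^ n)
      = u ^ (-(m * E)) / qPochInf (u ^ 2) (u ^ 2)
          * (eulerCoeff (u ^ 2) k * ((u ^ 2) ^ (1 - m)) ^ k) := by
  have hq := norm_sq_lt_one hu1
  rw [tsum_mul_left, tsum_inv_qPoch_mul_pow_pow_succ hq, tetTerm_eq_eulerCoeff hu]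
  field_simp [qPoch_ne_zero hq hq.le (k + E)]

end TetrahedralIndex

/-- for `e ≥ 0`,
`Σ_{n≥0} (q^{e/2+1})^n/(q;q)_n · I_Δ(m-n,e) = q^{-me/2} (q^{1-m};q)_∞/(q;q)_∞`,
with absolute convergence; in particular the sum vanishes for `m > 0`. Here `u = q^{1/2}`. -/
theorem stmt_13 (u : ℂ) (hu0 : 0 < ‖u‖) (hu1 : ‖u‖ < 1) (q : ℂ) (hq : q = u ^ 2)
    (m e : ℤ) (he : 0 ≤ e) :
    Summable (fun n : ℕ =>
      ‖(u ^ (e + 2)) ^ n / qPoch q q n * tetIndex u (m - n) e‖) ∧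
    ∑' n : ℕ, (u ^ (e + 2)) ^ n / qPoch q q n * tetIndex u (m - n) e =
      u ^ (-(m * e)) * qPochInf (q ^ (1 - m)) q / qPochInf q q ∧
    (0 < m → ∑' n : ℕ, (u ^ (e + 2)) ^ n / qPoch q q n * tetIndex u (m - n) e = 0) := by
  have hu : u ≠ 0 := norm_pos_iff.1 hu0
  lift e to ℕ using he with E
  subst hq
  have hq := norm_sq_lt_one hu1
  set f : ℕ × ℕ → ℂ := fun p =>
    tetTerm u m E p.2 * ((qPoch (u ^ 2) (u ^ 2) p.1)⁻¹ * ((u ^ 2) ^ (p.2 + E + 1)) ^ p.1)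
  have hf : Summable fun p => ‖f p‖ :=
    summable_norm_mul_inv_qPoch_mul_pow (c := tetTerm u m E)
      (w := fun k => (u ^ 2) ^ (k + E + 1)) hq (summable_norm_tetTerm hu hu1 m E) hq
      fun k => by rw [pow_succ]; exact norm_pow_mul_le hq.le (k + E) (u ^ 2)
  have hrow : ∀ n : ℕ,
      (u ^ ((E : ℤ) + 2)) ^ n / qPoch (u ^ 2) (u ^ 2) n * tetIndex u (m - n) E
        = ∑' k, f (n, k) := fun n => by
    rw [tetIndex, ← tsum_mul_left]
    exact tsum_congr fun k => pow_div_qPoch_mul_tetTerm_sub hu m E n k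
  have hsum :
      ∑' n : ℕ, (u ^ ((E : ℤ) + 2)) ^ n / qPoch (u ^ 2) (u ^ 2) n * tetIndex u (m - n) E
        = u ^ (-(m * E)) * qPochInf ((u ^ 2) ^ (1 - m)) (u ^ 2) / qPochInf (u ^ 2) (u ^ 2) := by
    rw [tsum_congr hrow, ← hf.of_norm.tsum_comm (f := fun n k => f (n, k)),
      tsum_congr (tsum_tetTerm_mul_inv_qPoch_mul_pow hu hu1 m E), tsum_mul_left,
      tsum_eulerCoeff_mul_pow hq, mul_div_right_comm]
  refine ⟨?_, hsum, fun hm => ?_⟩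
  · refine hf.prod.of_nonneg_of_le (fun n => norm_nonneg _) fun n => ?_
    rw [hrow]
    exact norm_tsum_le_tsum_norm (hf.prod_factor n)
  · rw [hsum, qPochInf_zpow_one_sub_eq_zero (pow_ne_zero 2 hu) hm, mul_zero, zero_div]
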